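/- arXiv:1701.05636 — 4 statements merged into one kernel-verified Lean document; each statement's English description precedes it below -/
import Mathlib

section
/- For the wavefunction |Ψ⟩ = Σ_{x_1,x_2} α_{x_1} U_{x_1 x_2} |x̃_2⟩|x_1⟩|x_2⟩ on Q ⊗ A_1 ⊗ A_2 (with α a unit-norm amplitude vector and U unitary), the reduced density matrix ρ(A_1 A_2) obtained by tracing out Q satisfies S(A_1 A_2) = S(A_2) = H[q^{(2)}], where q^{(2)}_{x_2} = Σ_{x_1} |α_{x_1}|^2 |U_{x_1 x_2}|^2. -/
open Matrix BigOperators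

/-- Von Neumann entropy of a Hermitian matrix, via its eigenvalues (natural log). -/
noncomputable def vnEntropy {n : Type*} [Fintype n] [DecidableEq n]
    {ρ : Matrix n n ℂ} (h : ρ.IsHermitian) : ℝ :=
  -∑ i, h.eigenvalues i * Real.log (h.eigenvalues i)

/-- Shannon entropy of a probability vector (natural log). -/
noncomputable def shannonH {n : Type*} [Fintype n] (q : n → ℝ) : ℝ :=
  -∑ i, q i * Real.log (q i)

/-!
Write `M` for the coefficient matrix of `Ψ` between `Q` and `A₁A₂`. Then `ρ(A₁A₂) = M Mᴴ`, while
`Mᴴ M` is the state of `Q`; since `Q` is a copy of `A₂`, both `Mᴴ M` and `ρ(A₂)` are the diagonal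
matrix `diag q⁽²⁾`. The matrices `M Mᴴ` and `Mᴴ M` have the same nonzero eigenvalues with
multiplicity (`Matrix.charpoly_mul_comm'`), and `x log x` vanishes at `0`, so their entropies agree.
-/

open Polynomial

section Entropy

variable {m n : Type*} [Fintype m] [DecidableEq m] [Fintype n] [DecidableEq n]

lemma vnEntropy_congr {ρ σ : Matrix n n ℂ} (hρ : ρ.IsHermitian) (hσ : σ.IsHermitian)
    (h : ρ = σ) : vnEntropy hρ = vnEntropy hσ := by
  subst h; rfl

lemma vnEntropy_eq_neg_sum_roots_charpoly {ρ : Matrix n n ℂ} (h : ρ.IsHermitian) :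
    vnEntropy h = -(ρ.charpoly.roots.map fun z => z.re * Real.log z.re).sum := by
  rw [h.roots_charpoly_eq_eigenvalues, Multiset.map_map, vnEntropy,
    Finset.sum_eq_multiset_sum]
  simp

lemma vnEntropy_eq_of_X_pow_mul_charpoly_eq {ρ : Matrix m m ℂ} {σ : Matrix n n ℂ}
    (hρ : ρ.IsHermitian) (hσ : σ.IsHermitian) {k l : ℕ}
    (h : (X : ℂ[X]) ^ k * ρ.charpoly = X ^ l * σ.charpoly) :
    vnEntropy hρ = vnEntropy hσ := by
  have hroots := congrArg Polynomial.roots h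
  rw [roots_mul (mul_ne_zero (pow_ne_zero _ X_ne_zero) ρ.charpoly_monic.ne_zero),
    roots_mul (mul_ne_zero (pow_ne_zero _ X_ne_zero) σ.charpoly_monic.ne_zero),
    roots_X_pow, roots_X_pow] at hroots
  have := congrArg (fun s : Multiset ℂ => (s.map fun z => z.re * Real.log z.re).sum) hroots
  simpa [vnEntropy_eq_neg_sum_roots_charpoly, Multiset.map_nsmul, Multiset.sum_nsmul] using this

lemma vnEntropy_mul_comm {A : Matrix m n ℂ} {B : Matrix n m ℂ}
    (hAB : (A * B).IsHermitian) (hBA : (B * A).IsHermitian) :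
    vnEntropy hAB = vnEntropy hBA :=
  vnEntropy_eq_of_X_pow_mul_charpoly_eq hAB hBA (charpoly_mul_comm' A B)

lemma vnEntropy_diagonal (q : n → ℝ) (h : (diagonal fun i => (q i : ℂ)).IsHermitian) :
    vnEntropy h = shannonH q := by
  rw [vnEntropy_eq_neg_sum_roots_charpoly, charpoly_diagonal, roots_prod _ _
    (Finset.prod_ne_zero_iff.mpr fun i _ => X_sub_C_ne_zero _), shannonH]
  simp

end Entropy

section TwoAncilla

variable {ι κ : Type*} [DecidableEq ι]

def twoAncillaState (α : κ → ℂ) (U : Matrix κ ι ℂ) (v : ι × κ × ι) : ℂ :=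
  (if v.1 = v.2.2 then 1 else 0) * α v.2.1 * U v.2.1 v.2.2

/-- The vector `Ψ ∈ Q ⊗ P` reshaped into a `P × Q` matrix `M`; tracing out `Q` gives `M * Mᴴ`. -/
def coefficientMatrix {Q P : Type*} (Ψ : Q × P → ℂ) : Matrix P Q ℂ :=
  of fun p x => Ψ (x, p)

lemma twoAncillaState_swap (α : κ → ℂ) (U : Matrix κ ι ℂ) (a : ι) (x : κ) (y : ι) :
    twoAncillaState α U (a, x, y) = twoAncillaState α U (y, x, a) := by
  by_cases h : a = y
  · rw [h]
  · simp [twoAncillaState, h, Ne.symm h]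

variable [Fintype ι]

lemma sum_twoAncillaState_mul_star (α : κ → ℂ) (U : Matrix κ ι ℂ) (x : κ) (y y' : ι) :
    ∑ a, twoAncillaState α U (a, x, y) * star (twoAncillaState α U (a, x, y')) =
      if y = y' then ((‖α x‖ ^ 2 * ‖U x y‖ ^ 2 : ℝ) : ℂ) else 0 := by
  simp only [twoAncillaState, ite_mul, one_mul, zero_mul, Finset.sum_ite_eq', Finset.mem_univ,
    if_true]
  split_ifs with h
  · subst h
    rw [Complex.star_def, Complex.mul_conj', norm_mul]
    push_cast
    ring
  · rw [star_zero, mul_zero]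

variable [Fintype κ]

lemma conjTranspose_mul_coefficientMatrix_twoAncillaState (α : κ → ℂ) (U : Matrix κ ι ℂ) :
    (coefficientMatrix (twoAncillaState α U))ᴴ * coefficientMatrix (twoAncillaState α U) =
      diagonal fun y => ((∑ x, ‖α x‖ ^ 2 * ‖U x y‖ ^ 2 : ℝ) : ℂ) := by
  ext a b
  simp only [mul_apply, conjTranspose_apply, coefficientMatrix, of_apply, Fintype.sum_prod_type]
  simp only [twoAncillaState_swap α U a, twoAncillaState_swap α U b, mul_comm (star _),
    sum_twoAncillaState_mul_star, diagonal_apply, eq_comm (a := b)]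
  obtain rfl | hab := eq_or_ne a b
  · simp
  · simp [hab]

lemma partialTrace_twoAncillaState (α : κ → ℂ) (U : Matrix κ ι ℂ) :
    (of fun y y' =>
        ∑ x, ∑ a, twoAncillaState α U (a, x, y) * star (twoAncillaState α U (a, x, y'))) =
      diagonal fun y => ((∑ x, ‖α x‖ ^ 2 * ‖U x y‖ ^ 2 : ℝ) : ℂ) := by
  ext y y'
  simp only [of_apply, sum_twoAncillaState_mul_star, diagonal_apply]
  split_ifs <;> simp

end TwoAncilla

theorem two_ancilla_entropy_at_end_general {d : ℕ} (α : Fin d → ℂ)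
    (U : Matrix (Fin d) (Fin d) ℂ)
    (Ψ : Fin d × Fin d × Fin d → ℂ)
    (hΨ : Ψ = fun v => (if v.1 = v.2.2 then 1 else 0) * α v.2.1 * U v.2.1 v.2.2)
    (ρ12 : Matrix (Fin d × Fin d) (Fin d × Fin d) ℂ)
    (hρ12 : ρ12 = Matrix.of fun p p' =>
      ∑ xt, Ψ (xt, p.1, p.2) * star (Ψ (xt, p'.1, p'.2)))
    (ρ2 : Matrix (Fin d) (Fin d) ℂ)
    (hρ2 : ρ2 = Matrix.of fun y y' => ∑ x1, ρ12 (x1, y) (x1, y'))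
    (h12 : ρ12.IsHermitian) (h2 : ρ2.IsHermitian) :
    vnEntropy h12 = vnEntropy h2 ∧
    vnEntropy h2 =
      shannonH (fun x2 => ∑ x1, ‖α x1‖ ^ 2 * ‖U x1 x2‖ ^ 2) := by
  subst hΨ
  set M := coefficientMatrix (twoAncillaState α U)
  set q : Fin d → ℝ := fun y => ∑ x, ‖α x‖ ^ 2 * ‖U x y‖ ^ 2
  have hρ12M : ρ12 = M * Mᴴ := hρ12
  have hρ2q : ρ2 = diagonal fun y => (q y : ℂ) :=
    hρ2.trans (hρ12 ▸ partialTrace_twoAncillaState α U)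
  have hS2 : vnEntropy h2 = shannonH q :=
    (vnEntropy_congr h2 (hρ2q ▸ h2) hρ2q).trans (vnEntropy_diagonal q _)
  refine ⟨?_, hS2⟩
  calc vnEntropy h12 = vnEntropy (isHermitian_mul_conjTranspose_self M) :=
        vnEntropy_congr _ _ hρ12M
    _ = vnEntropy (isHermitian_conjTranspose_mul_self M) := vnEntropy_mul_comm _ _
    _ = vnEntropy h2 := vnEntropy_congr _ _
        ((conjTranspose_mul_coefficientMatrix_twoAncillaState α U).trans hρ2q.symm)

/-- For |Ψ⟩ = Σ_{x₁,x₂} α_{x₁} U_{x₁x₂} |x̃₂⟩|x₁⟩|x₂⟩ on Q ⊗ A₁ ⊗ A₂, the reduced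
state ρ(A₁A₂) (tracing out Q) satisfies S(A₁A₂) = S(A₂) = H[q⁽²⁾] with
q⁽²⁾_{x₂} = Σ_{x₁} |α_{x₁}|²|U_{x₁x₂}|². -/
theorem two_ancilla_entropy_at_end {d : ℕ} (α : Fin d → ℂ)
    (hα : ∑ x, ‖α x‖ ^ 2 = 1)
    (U : Matrix (Fin d) (Fin d) ℂ) (hU : U ∈ Matrix.unitaryGroup (Fin d) ℂ)
    (Ψ : Fin d × Fin d × Fin d → ℂ)
    (hΨ : Ψ = fun v => (if v.1 = v.2.2 then 1 else 0) * α v.2.1 * U v.2.1 v.2.2)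
    (ρ12 : Matrix (Fin d × Fin d) (Fin d × Fin d) ℂ)
    (hρ12 : ρ12 = Matrix.of fun p p' =>
      ∑ xt, Ψ (xt, p.1, p.2) * star (Ψ (xt, p'.1, p'.2)))
    (ρ2 : Matrix (Fin d) (Fin d) ℂ)
    (hρ2 : ρ2 = Matrix.of fun y y' => ∑ x1, ρ12 (x1, y) (x1, y'))
    (h12 : ρ12.IsHermitian) (h2 : ρ2.IsHermitian) :
    vnEntropy h12 = vnEntropy h2 ∧
    vnEntropy h2 =
      shannonH (fun x2 => ∑ x1, ‖α x1‖ ^ 2 * ‖U x1 x2‖ ^ 2) :=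
  two_ancilla_entropy_at_end_general α U Ψ hΨ ρ12 hρ12 ρ2 hρ2 h12 h2
end

section
/- For three ancillae measuring an unprepared (maximally mixed) qudit via unitaries U^{(2)}, U^{(3)}, the joint density matrix ρ(A_1A_2A_3) = (1/d) Σ_{x_1} |x_1⟩⟨x_1| ⊗ Σ_{x_2,x_2'} U^{(2)}_{x_1x_2} U^{(2)*}_{x_1x_2'} |x_2⟩⟨x_2'| ⊗ Σ_{x_3} U^{(3)}_{x_2x_3} U^{(3)*}_{x_2'x_3} |x_3⟩⟨x_3| has von Neumann entropy equal to the Shannon entropy of p_{x_1x_3} = (1/d) Σ_{x_2} |U^{(2)}_{x_1x_2}|^2 |U^{(3)}_{x_2x_3}|^2, i.e. S(A_1A_2A_3) = S(A_1A_3). -/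
open Matrix BigOperators

/-!
After reordering the factors as `A₂ ⊗ (A₁A₃)`, the state `ρ(A₁A₂A₃)` is block diagonal over
`(x₁, x₃)`, each block being the rank-one matrix `(1/d) |ψ⟩⟨ψ|` with
`ψ(x₂) = U⁽²⁾_{x₁x₂} U⁽³⁾_{x₂x₃}` and `⟨ψ|ψ⟩ / d = p_{x₁x₃}`. Hence the characteristic polynomial
of `ρ(A₁A₂A₃)` is a power of `X` times `∏ (X - p_{x₁x₃})`, the characteristic polynomial of the
diagonal marginal `ρ(A₁A₃)`: the two states have the same nonzero spectrum, and the extra zero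
eigenvalues do not contribute to the entropy because `0 log 0 = 0`.
-/

open Polynomial Real

namespace Matrix

variable {R : Type*} [CommRing R] {m o : Type*} [Fintype m] [DecidableEq m]
  [Fintype o] [DecidableEq o]

theorem charpoly_blockDiagonal (M : o → Matrix m m R) :
    (blockDiagonal M).charpoly = ∏ k, (M k).charpoly := by
  have : charmatrix (blockDiagonal M) = blockDiagonal fun k => charmatrix (M k) := by
    ext ⟨i, k⟩ ⟨j, k'⟩
    by_cases hk : k = k' <;> by_cases hij : i = j <;> simp [blockDiagonal_apply, hk, hij]
  rw [charpoly, this, det_blockDiagonal]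
  rfl

theorem charpoly_vecMulVec_of_nonempty [Nonempty m] (u v : m → R) :
    (vecMulVec u v).charpoly = X ^ (Fintype.card m - 1) * (X - C (u ⬝ᵥ v)) := by
  rw [charpoly_vecMulVec, mul_sub, ← pow_succ, Nat.sub_add_cancel Fintype.card_pos,
    smul_eq_C_mul, mul_comm]

theorem charpoly_blockDiagonal_vecMulVec [Nonempty m] (u v : o → m → R) :
    (blockDiagonal fun k => vecMulVec (u k) (v k)).charpoly =
      X ^ ((Fintype.card m - 1) * Fintype.card o) * (diagonal fun k => u k ⬝ᵥ v k).charpoly := by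
  simp only [charpoly_blockDiagonal, charpoly_vecMulVec_of_nonempty, charpoly_diagonal,
    Finset.prod_mul_distrib, Finset.prod_const, Finset.card_univ, pow_mul]

end Matrix

section Entropy

variable {n n' : Type*} [Fintype n] [DecidableEq n] [Fintype n'] [DecidableEq n']

theorem Matrix.IsHermitian.vnEntropy_eq_sum_roots_charpoly {A : Matrix n n ℂ}
    (hA : A.IsHermitian) :
    vnEntropy hA = (A.charpoly.roots.map fun z => negMulLog z.re).sum := by
  simp [vnEntropy, hA.roots_charpoly_eq_eigenvalues, negMulLog, Finset.sum_neg_distrib]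

theorem vnEntropy_eq_of_charpoly_eq_X_pow_mul {A : Matrix n n ℂ} {B : Matrix n' n' ℂ}
    (hA : A.IsHermitian) (hB : B.IsHermitian) {k : ℕ}
    (h : A.charpoly = X ^ k * B.charpoly) : vnEntropy hA = vnEntropy hB := by
  have hroots : A.charpoly.roots = k • {0} + B.charpoly.roots := by
    rw [h, roots_mul (by simpa using B.charpoly_monic.ne_zero), roots_X_pow]
  simp [hA.vnEntropy_eq_sum_roots_charpoly, hB.vnEntropy_eq_sum_roots_charpoly, hroots,
    Multiset.map_nsmul, Multiset.sum_nsmul]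

theorem vnEntropy_eq_shannonH_of_eq_diagonal {A : Matrix n n ℂ} (hA : A.IsHermitian)
    {q : n → ℝ} (h : A = diagonal fun i => (q i : ℂ)) : vnEntropy hA = shannonH q := by
  subst h
  rw [hA.vnEntropy_eq_sum_roots_charpoly, charpoly_diagonal, roots_prod _ _ (by
    simp [Finset.prod_ne_zero_iff, X_sub_C_ne_zero])]
  simp [shannonH, negMulLog, Finset.sum_neg_distrib]

end Entropy

section ThreeAncilla

variable {m : Type*} (c : ℂ) (U V : Matrix m m ℂ)

def pathAmplitude (k : m × m) (i : m) : ℂ := U k.1 i * V i k.2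

theorem smul_pathAmplitude_dotProduct_star [Fintype m] (k : m × m) :
    (c • pathAmplitude U V k) ⬝ᵥ star (pathAmplitude U V k) =
      c * ∑ i, ((‖U k.1 i‖ ^ 2 * ‖V i k.2‖ ^ 2 : ℝ) : ℂ) := by
  simp only [dotProduct, Pi.smul_apply, Pi.star_apply, pathAmplitude, smul_eq_mul, Finset.mul_sum]
  refine Finset.sum_congr rfl fun i _ => ?_
  rw [star_mul', mul_assoc, mul_mul_mul_comm, Complex.star_def, Complex.mul_conj',
    Complex.mul_conj']
  push_cast
  ring

/-- Reorders `A₁A₂A₃` as `A₂(A₁A₃)`, the index layout of `blockDiagonal`. -/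
def swapFirstTwo : m × m × m ≃ m × m × m :=
  ⟨fun x => (x.2.1, x.1, x.2.2), fun x => (x.2.1, x.1, x.2.2), fun _ => rfl, fun _ => rfl⟩

variable [DecidableEq m]

/-- The state `ρ(A₁A₂A₃)`, with the weight `c` in place of `1 / d`. -/
def ancillaState : Matrix (m × m × m) (m × m × m) ℂ :=
  of fun v w => (if v.1 = w.1 then 1 else 0) * (if v.2.2 = w.2.2 then 1 else 0) * c *
    (U v.1 v.2.1 * star (U v.1 w.2.1) * (V v.2.1 v.2.2 * star (V w.2.1 v.2.2)))

theorem reindex_ancillaState :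
    reindex swapFirstTwo swapFirstTwo (ancillaState c U V) =
      blockDiagonal fun k => vecMulVec (c • pathAmplitude U V k) (star (pathAmplitude U V k)) := by
  ext ⟨i, a, b⟩ ⟨j, a', b'⟩
  obtain rfl | ha := eq_or_ne a a'
  · obtain rfl | hb := eq_or_ne b b'
    · simp only [reindex_apply, submatrix_apply, swapFirstTwo, Equiv.coe_fn_symm_mk,
        ancillaState, of_apply, blockDiagonal_apply_eq, vecMulVec_apply, Pi.smul_apply,
        Pi.star_apply, pathAmplitude, if_true, smul_eq_mul, star_mul']
      ring
    · simp [ancillaState, swapFirstTwo, blockDiagonal_apply, hb]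
  · simp [ancillaState, swapFirstTwo, blockDiagonal_apply, ha]

variable [Fintype m]

def ancillaMarginal : Matrix (m × m) (m × m) ℂ :=
  of fun a b => ∑ x2, ancillaState c U V (a.1, x2, a.2) (b.1, x2, b.2)

theorem ancillaMarginal_eq_diagonal :
    ancillaMarginal c U V =
      diagonal fun k => (c • pathAmplitude U V k) ⬝ᵥ star (pathAmplitude U V k) := by
  ext ⟨a, b⟩ ⟨a', b'⟩
  obtain rfl | ha := eq_or_ne a a'
  · obtain rfl | hb := eq_or_ne b b'
    · simp only [ancillaMarginal, ancillaState, pathAmplitude, dotProduct, of_apply,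
        diagonal_apply_eq, if_true, Pi.smul_apply, Pi.star_apply, smul_eq_mul, star_mul']
      exact Finset.sum_congr rfl fun _ _ => by ring
    · simp [ancillaMarginal, ancillaState, hb]
  · simp [ancillaMarginal, ancillaState, ha]

theorem charpoly_ancillaState [Nonempty m] :
    (ancillaState c U V).charpoly =
      X ^ ((Fintype.card m - 1) * Fintype.card (m × m)) * (ancillaMarginal c U V).charpoly := by
  rw [← charpoly_reindex swapFirstTwo, reindex_ancillaState, charpoly_blockDiagonal_vecMulVec,
    ancillaMarginal_eq_diagonal]

end ThreeAncilla

theorem three_ancilla_entropy_on_boundary_general {d : ℕ} (hd : 0 < d)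
    (U2 U3 : Matrix (Fin d) (Fin d) ℂ)
    (ρ : Matrix (Fin d × Fin d × Fin d) (Fin d × Fin d × Fin d) ℂ)
    (hρdef : ρ = Matrix.of fun v w =>
      (if v.1 = w.1 then 1 else 0) * (if v.2.2 = w.2.2 then 1 else 0) *
        (1 / (d : ℂ)) *
        (U2 v.1 v.2.1 * star (U2 v.1 w.2.1) *
          (U3 v.2.1 v.2.2 * star (U3 w.2.1 v.2.2))))
    (hρ : ρ.IsHermitian)
    (ρ13 : Matrix (Fin d × Fin d) (Fin d × Fin d) ℂ)
    (hρ13def : ρ13 = Matrix.of fun a b => ∑ x2, ρ (a.1, x2, a.2) (b.1, x2, b.2))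
    (h13 : ρ13.IsHermitian) :
    vnEntropy hρ = vnEntropy h13 ∧
    vnEntropy hρ = shannonH (fun a : Fin d × Fin d =>
      (1 / d) * ∑ x2, ‖U2 a.1 x2‖ ^ 2 * ‖U3 x2 a.2‖ ^ 2) := by
  have : NeZero d := ⟨hd.ne'⟩
  have hstate : ρ = ancillaState (1 / d) U2 U3 := hρdef
  have hmarginal : ρ13 = ancillaMarginal (1 / d) U2 U3 := by rw [hρ13def, hstate]; rfl
  subst hstate hmarginal
  have hentropy : vnEntropy hρ = vnEntropy h13 :=
    vnEntropy_eq_of_charpoly_eq_X_pow_mul hρ h13 (charpoly_ancillaState _ U2 U3)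
  refine ⟨hentropy, hentropy.trans (vnEntropy_eq_shannonH_of_eq_diagonal h13 ?_)⟩
  rw [ancillaMarginal_eq_diagonal]
  congr 1 with k
  rw [smul_pathAmplitude_dotProduct_star]
  push_cast
  rfl

/-- For three ancillae measuring an unprepared (maximally mixed) qudit via unitaries
U⁽²⁾, U⁽³⁾, the joint state ρ(A₁A₂A₃) has von Neumann entropy equal to that of its
A₂-partial trace ρ(A₁A₃), which is the Shannon entropy of
p_{x₁x₃} = (1/d)Σ_{x₂}|U⁽²⁾_{x₁x₂}|²|U⁽³⁾_{x₂x₃}|². -/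
theorem three_ancilla_entropy_on_boundary {d : ℕ} (hd : 0 < d)
    (U2 U3 : Matrix (Fin d) (Fin d) ℂ)
    (hU2 : U2 ∈ Matrix.unitaryGroup (Fin d) ℂ)
    (hU3 : U3 ∈ Matrix.unitaryGroup (Fin d) ℂ)
    (ρ : Matrix (Fin d × Fin d × Fin d) (Fin d × Fin d × Fin d) ℂ)
    (hρdef : ρ = Matrix.of fun v w =>
      (if v.1 = w.1 then 1 else 0) * (if v.2.2 = w.2.2 then 1 else 0) *
        (1 / (d : ℂ)) *
        (U2 v.1 v.2.1 * star (U2 v.1 w.2.1) *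
          (U3 v.2.1 v.2.2 * star (U3 w.2.1 v.2.2))))
    (hρ : ρ.IsHermitian)
    (ρ13 : Matrix (Fin d × Fin d) (Fin d × Fin d) ℂ)
    (hρ13def : ρ13 = Matrix.of fun a b => ∑ x2, ρ (a.1, x2, a.2) (b.1, x2, b.2))
    (h13 : ρ13.IsHermitian) :
    vnEntropy hρ = vnEntropy h13 ∧
    vnEntropy hρ = shannonH (fun a : Fin d × Fin d =>
      (1 / d) * ∑ x2, ‖U2 a.1 x2‖ ^ 2 * ‖U3 x2 a.2‖ ^ 2) :=
  three_ancilla_entropy_on_boundary_general hd U2 U3 ρ hρdef hρ ρ13 hρ13def h13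
end

section
/- Let X_i,...,X_j be random variables with joint distribution p(x_i,...,x_j) = (1/d) Π_{k=i+1}^{j} |U^{(k)}_{x_{k-1}x_k}|^2 for unitaries U^{(k)}, and consider the 'non-Markovian' quantum entropies defined by S(A_i...A_j) = 1 − (1/d) Σ_{x_i,x_j} p^{(ij)}_{x_ix_j} log_d p^{(ij)}_{x_ix_j}, with p^{(ij)}_{x_ix_j} = Σ_{x_{i+1},...,x_{j-1}} Π_{k=i+1}^{j} |U^{(k)}_{x_{k-1}x_k}|^2. Then S(A_j|A_{j-1}) − S(A_j|A_{j-1}...A_i) ≤ 1, where S(A_j|A_{j-1}...A_i) = S(A_i...A_j) − S(A_i...A_{j-1}). -/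
/-!
Writing `H(P) = ∑_{a,b} -P_{ab} log P_{ab}` for the total row entropy of the transition matrix
`P = p⁽ⁱʲ⁾`, the entropy is `S(A_i…A_j) = 1 + H(p⁽ⁱʲ⁾) / (d log d)`. Every row of a stochastic
matrix has entropy at most `log d`, so `S(A_j|A_{j-1}) ≤ 1`. Since `|U_{ab}|²` is doubly stochastic
and `p⁽ⁱʲ⁾ = p⁽ⁱʲ⁻¹⁾ |U⁽ʲ⁾|²`, Jensen's inequality for the concave `-x log x` (weighted by the
columns of `|U⁽ʲ⁾|²`) gives `H(p⁽ⁱʲ⁾) ≥ H(p⁽ⁱʲ⁻¹⁾)`, i.e. `S(A_j|A_{j-1}…A_i) ≥ 0`.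
-/

open Matrix BigOperators

/-- The doubly stochastic transition matrix of the k-th measurement: |U⁽ᵏ⁾_{ab}|². -/
noncomputable def transMat {d : ℕ} (U : ℕ → Matrix (Fin d) (Fin d) ℂ) (k : ℕ) :
    Matrix (Fin d) (Fin d) ℝ :=
  Matrix.of fun a b => ‖U k a b‖ ^ 2

/-- p⁽ⁱʲ⁾_{x_i x_j} = Σ_{x_{i+1},…,x_{j-1}} Π_{k=i+1}^{j} |U⁽ᵏ⁾_{x_{k-1}x_k}|²,
as the (x_i, x_j) entry of the ordered product of transition matrices. -/
noncomputable def pathMat {d : ℕ} (U : ℕ → Matrix (Fin d) (Fin d) ℂ) (i j : ℕ) :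
    Matrix (Fin d) (Fin d) ℝ :=
  (((List.range (j - i)).map fun t => transMat U (i + 1 + t)).prod)

/-- 'Non-Markovian' joint entropy of the unamplified chain A_i…A_j (in dits, base-d
logarithms): S(A_i…A_j) = 1 − (1/d) Σ_{x_i,x_j} p⁽ⁱʲ⁾ log_d p⁽ⁱʲ⁾. -/
noncomputable def chainS (d : ℕ) (U : ℕ → Matrix (Fin d) (Fin d) ℂ) (i j : ℕ) : ℝ :=
  1 - (1 / d) * ∑ a, ∑ b,
    pathMat U i j a b * (Real.log (pathMat U i j a b) / Real.log d)

open Real Finset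

section Entropy

variable {n : Type*} [Fintype n]

theorem sum_negMulLog_le_log_card {q : n → ℝ} (hq₀ : ∀ b, 0 ≤ q b) (hq₁ : ∑ b, q b = 1) :
    ∑ b, negMulLog (q b) ≤ log (Fintype.card n) := by
  have hcard : (0 : ℝ) < Fintype.card n := by
    rw [← card_univ]
    exact_mod_cast (nonempty_of_sum_ne_zero (hq₁ ▸ one_ne_zero)).card_pos
  have jensen := concaveOn_negMulLog.le_map_sum (t := univ)
    (w := fun _ => (Fintype.card n : ℝ)⁻¹) (p := q) (fun _ _ => by positivity)
    (by simp [hcard.ne']) (fun b _ => hq₀ b)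
  simp only [smul_eq_mul, ← mul_sum, hq₁, mul_one] at jensen
  rw [negMulLog, log_inv, neg_mul_neg] at jensen
  exact le_of_mul_le_mul_left jensen (inv_pos.mpr hcard)

variable [DecidableEq n]

theorem sum_negMulLog_le_sum_negMulLog_vecMul {p : n → ℝ} (hp : ∀ c, 0 ≤ p c)
    {T : Matrix n n ℝ} (hT : T ∈ doublyStochastic ℝ n) :
    ∑ c, negMulLog (p c) ≤ ∑ b, negMulLog ((p ᵥ* T) b) := by
  have jensen (b : n) : ∑ c, T c b * negMulLog (p c) ≤ negMulLog ((p ᵥ* T) b) := by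
    have := concaveOn_negMulLog.le_map_sum (t := univ) (w := fun c => T c b) (p := p)
      (fun c _ => nonneg_of_mem_doublyStochastic hT) (sum_col_of_mem_doublyStochastic hT b)
      (fun c _ => hp c)
    simpa only [smul_eq_mul, vecMul, dotProduct, mul_comm (p _)] using this
  calc ∑ c, negMulLog (p c)
      = ∑ c, (∑ b, T c b) * negMulLog (p c) := by
        simp only [sum_row_of_mem_doublyStochastic hT, one_mul]
    _ = ∑ b, ∑ c, T c b * negMulLog (p c) := by
        simp only [sum_mul]
        exact sum_comm
    _ ≤ ∑ b, negMulLog ((p ᵥ* T) b) := sum_le_sum fun b _ => jensen b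

end Entropy

namespace Matrix

variable {n : Type*} [Fintype n]

noncomputable def sumNegMulLog (P : Matrix n n ℝ) : ℝ :=
  ∑ a, ∑ b, negMulLog (P a b)

theorem sumNegMulLog_le_card_mul_log [DecidableEq n] {P : Matrix n n ℝ}
    (hP : P ∈ rowStochastic ℝ n) :
    sumNegMulLog P ≤ Fintype.card n * log (Fintype.card n) := by
  calc sumNegMulLog P ≤ ∑ _a : n, log (Fintype.card n) :=
        sum_le_sum fun a _ => sum_negMulLog_le_log_card
          (fun b => nonneg_of_mem_rowStochastic hP) (sum_row_of_mem_rowStochastic hP a)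
    _ = Fintype.card n * log (Fintype.card n) := by simp

theorem sumNegMulLog_le_sumNegMulLog_mul [DecidableEq n] {P T : Matrix n n ℝ}
    (hP : ∀ a b, 0 ≤ P a b) (hT : T ∈ doublyStochastic ℝ n) :
    sumNegMulLog P ≤ sumNegMulLog (P * T) :=
  sum_le_sum fun a _ => sum_negMulLog_le_sum_negMulLog_vecMul (hP a) hT

theorem normSq_mem_doublyStochastic_of_mem_unitaryGroup [DecidableEq n] {u : Matrix n n ℂ}
    (hu : u ∈ unitaryGroup n ℂ) : (of fun a b => ‖u a b‖ ^ 2) ∈ doublyStochastic ℝ n := by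
  have hsq (z : ℂ) : ‖z‖ ^ 2 = (z * star z).re := by
    simp [Complex.mul_conj, Complex.sq_norm]
  refine mem_doublyStochastic_iff_sum.mpr ⟨fun a b => sq_nonneg _, fun a => ?_, fun b => ?_⟩
  · have := congr_arg (fun M => (M a a).re) (mem_unitaryGroup_iff.mp hu)
    simpa [mul_apply, hsq] using this
  · have := congr_arg (fun M => (M b b).re) (mem_unitaryGroup_iff'.mp hu)
    simpa [mul_apply, hsq, mul_comm] using this

end Matrix

section Chain

variable {d : ℕ} {U : ℕ → Matrix (Fin d) (Fin d) ℂ}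

theorem transMat_mem_doublyStochastic (hU : ∀ k, U k ∈ unitaryGroup (Fin d) ℂ) (k : ℕ) :
    transMat U k ∈ doublyStochastic ℝ (Fin d) :=
  normSq_mem_doublyStochastic_of_mem_unitaryGroup (hU k)

theorem pathMat_mem_doublyStochastic (hU : ∀ k, U k ∈ unitaryGroup (Fin d) ℂ) (i j : ℕ) :
    pathMat U i j ∈ doublyStochastic ℝ (Fin d) :=
  Submonoid.list_prod_mem _ <| by
    simpa using fun t _ => transMat_mem_doublyStochastic hU _

theorem pathMat_succ {i j : ℕ} (hij : i ≤ j) :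
    pathMat U i (j + 1) = pathMat U i j * transMat U (j + 1) := by
  rw [pathMat, pathMat, Nat.sub_add_comm hij, List.range_succ, List.map_append,
    List.prod_append]
  simp [Nat.add_right_comm, Nat.add_sub_cancel' hij]

-- Holds also for `d ≤ 1`, where `log d = 0` and both sides are `1`.
theorem chainS_eq (i j : ℕ) :
    chainS d U i j = 1 + sumNegMulLog (pathMat U i j) / (d * log d) := by
  simp only [chainS, sumNegMulLog, negMulLog, neg_mul, sum_neg_distrib, ← mul_div_assoc,
    ← sum_div, sub_eq_add_neg, neg_div]
  ring

end Chain

theorem unamplified_chain_nonmarkov_bound_general {d : ℕ}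
    (U : ℕ → Matrix (Fin d) (Fin d) ℂ)
    (hU : ∀ k, U k ∈ Matrix.unitaryGroup (Fin d) ℂ)
    (i j : ℕ) (hij : i < j) :
    (chainS d U (j - 1) j - 1) - (chainS d U i j - chainS d U i (j - 1)) ≤ 1 := by
  obtain ⟨k, rfl⟩ : ∃ k, j = k + 1 := Nat.exists_eq_add_one.mpr (Nat.zero_lt_of_lt hij)
  have hlast : sumNegMulLog (pathMat U k (k + 1)) ≤ d * log d := by
    simpa using sumNegMulLog_le_card_mul_log
      (mem_doublyStochastic_iff_mem_rowStochastic_and_mem_colStochastic.mp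
        (pathMat_mem_doublyStochastic hU k (k + 1))).1
  have hmono : sumNegMulLog (pathMat U i k) ≤ sumNegMulLog (pathMat U i (k + 1)) := by
    rw [pathMat_succ (by omega)]
    exact sumNegMulLog_le_sumNegMulLog_mul
      (fun a b => nonneg_of_mem_doublyStochastic (pathMat_mem_doublyStochastic hU i k))
      (transMat_mem_doublyStochastic hU (k + 1))
  have hD : (0 : ℝ) ≤ d * log d := mul_nonneg d.cast_nonneg (log_natCast_nonneg d)
  simp only [Nat.add_sub_cancel, chainS_eq]
  calc _ = (sumNegMulLog (pathMat U k (k + 1)) - sumNegMulLog (pathMat U i (k + 1))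
          + sumNegMulLog (pathMat U i k)) / (d * log d) := by ring
    _ ≤ 1 := div_le_one_of_le₀ (by linarith) hD

/-- For unamplified measurement chains, conditioning on more than the preceding ancilla
reduces the conditional entropy by at most one dit:
S(A_j|A_{j-1}) − S(A_j|A_{j-1}…A_i) ≤ 1, where S(A_j|A_{j-1}) = S(A_{j-1}A_j) − 1
and S(A_j|A_{j-1}…A_i) = S(A_i…A_j) − S(A_i…A_{j-1}). -/
theorem unamplified_chain_nonmarkov_bound {d : ℕ} (hd : 0 < d)
    (U : ℕ → Matrix (Fin d) (Fin d) ℂ)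
    (hU : ∀ k, U k ∈ Matrix.unitaryGroup (Fin d) ℂ)
    (i j : ℕ) (hij : i < j) :
    (chainS d U (j - 1) j - 1) - (chainS d U i j - chainS d U i (j - 1)) ≤ 1 :=
  unamplified_chain_nonmarkov_bound_general U hU i j hij
end

section
/- In the quantum Zeno setup, let q^{(n)} = 1/2 + (p − 1/2) cos^n(π/(2n)) be the probability to observe outcome 0 after n equally spaced measurements rotating by a total angle π/4, starting from preparation probability p ∈ [0,1]. Then lim_{n→∞} q^{(n)} = p. -/
open Filter

lemma cos_pow_tendsto :
    Tendsto (fun n : ℕ => (Real.cos (Real.pi / (2 * n))) ^ n) atTop (nhds 1) := by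
  have hlow : Tendsto (fun n : ℕ => 1 - Real.pi ^ 2 / (8 * n)) atTop (nhds 1) := by
    have h0 : Tendsto (fun n : ℕ => (Real.pi ^ 2 / 8) / n) atTop (nhds 0) :=
      tendsto_const_div_atTop_nhds_zero_nat _
    have := (tendsto_const_nhds (x := (1:ℝ))).sub h0
    simpa [div_div] using this
  refine tendsto_of_tendsto_of_tendsto_of_le_of_le' hlow tendsto_const_nhds ?_ ?_
  · filter_upwards [eventually_ge_atTop 2] with n hn
    have hn1 : (1:ℝ) ≤ n := by exact_mod_cast Nat.one_le_of_lt hn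
    have hn2 : (2:ℝ) ≤ n := by exact_mod_cast hn
    have hx : Real.pi / (2 * n) ≤ 1 := by
      rw [div_le_one (by positivity)]
      calc Real.pi ≤ 4 := Real.pi_le_four
        _ ≤ 2 * n := by linarith
    have hcos : 1 - Real.pi ^ 2 / (8 * n ^ 2) ≤ Real.cos (Real.pi / (2 * n)) := by
      have := Real.one_sub_sq_div_two_le_cos (x := Real.pi / (2 * n))
      have heq : (Real.pi / (2 * n)) ^ 2 / 2 = Real.pi ^ 2 / (8 * n ^ 2) := by
        field_simp; ring
      linarith [heq ▸ this]
    have hbase0 : (0:ℝ) ≤ 1 - Real.pi ^ 2 / (8 * n ^ 2) := by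
      have hpi : Real.pi ^ 2 ≤ 16 := by nlinarith [Real.pi_le_four, Real.pi_pos]
      have h4 : (4:ℝ) ≤ n ^ 2 := by nlinarith
      have h8 : (32:ℝ) ≤ 8 * n ^ 2 := by nlinarith
      have : Real.pi ^ 2 / (8 * n ^ 2) ≤ 16 / 32 :=
        div_le_div₀ (by norm_num) hpi (by norm_num) h8
      linarith
    have hpow : (1 - Real.pi ^ 2 / (8 * n ^ 2)) ^ n ≤ Real.cos (Real.pi / (2 * n)) ^ n :=
      pow_le_pow_left₀ hbase0 hcos n
    have hbern : 1 - Real.pi ^ 2 / (8 * n) ≤ (1 - Real.pi ^ 2 / (8 * n ^ 2)) ^ n := by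
      have := one_add_mul_le_pow (a := -(Real.pi ^ 2 / (8 * n ^ 2))) (by nlinarith [Real.pi_le_four, Real.pi_pos]) n
      have heq : 1 + (n:ℝ) * -(Real.pi ^ 2 / (8 * n ^ 2)) = 1 - Real.pi ^ 2 / (8 * n) := by
        field_simp; ring
      calc 1 - Real.pi ^ 2 / (8 * n) = 1 + (n:ℝ) * -(Real.pi ^ 2 / (8 * n ^ 2)) := heq.symm
        _ ≤ (1 + -(Real.pi ^ 2 / (8 * n ^ 2))) ^ n := this
        _ = (1 - Real.pi ^ 2 / (8 * n ^ 2)) ^ n := by ring_nf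
    linarith
  · filter_upwards [eventually_ge_atTop 1] with n hn
    have hn1 : (1:ℝ) ≤ n := by exact_mod_cast hn
    have h1 : Real.cos (Real.pi / (2 * n)) ≤ 1 := Real.cos_le_one _
    have h0 : 0 ≤ Real.cos (Real.pi / (2 * n)) := by
      apply Real.cos_nonneg_of_mem_Icc
      constructor
      · have h := Real.pi_pos
        have : (0:ℝ) ≤ Real.pi / (2 * n) := by positivity
        linarith
      · rw [div_le_div_iff₀ (by positivity) (by norm_num)]
        nlinarith [Real.pi_pos]
    calc Real.cos (Real.pi / (2 * n)) ^ n ≤ 1 ^ n := pow_le_pow_left₀ h0 h1 n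
      _ = 1 := one_pow n

/-- Quantum Zeno effect: q⁽ⁿ⁾ = 1/2 + (p − 1/2)·cosⁿ(π/(2n)) → p as n → ∞. -/
theorem zeno_limit (p : ℝ) (hp : p ∈ Set.Icc (0 : ℝ) 1) :
    Tendsto (fun n : ℕ =>
        1 / 2 + (p - 1 / 2) * (Real.cos (Real.pi / (2 * n))) ^ n)
      atTop (nhds p) := by
  have h := ((tendsto_const_nhds (x := (1:ℝ)/2)).add
    ((tendsto_const_nhds (x := p - 1/2)).mul cos_pow_tendsto))
  simpa using h
end
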